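/- arXiv:1904.08296 — 5 statements merged into one kernel-verified Lean document; each statement's English description precedes it below -/
import Mathlib

section
/- There exists a constant C > 0 such that for all real Y > 1, the sum ∑_{n > Y} 1/φ(n)², taken over all integers n > Y, satisfies ∑_{n > Y} 1/φ(n)² ≤ C/Y. -/
/-!
Since `n = ∑_{d ∣ n} φ (n / d)` and `φ d * φ (n / d) ≤ φ n`, one has `n / φ n ≤ ∑_{d ∣ n} 1 / φ d`,
so `1 / φ(n)² ≤ n⁻² ∑_{d, e ∣ n} 1 / (φ d φ e)`. Writing `d = g a`, `e = g b` with `g = gcd d e`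
gives `φ d φ e ≥ φ(g)² φ a φ b` and `g a b = lcm d e ∣ n`. Exchanging the order of summation and
using `∑_{n > Y, L ∣ n} n⁻² ≤ 2 / (L Y)` bounds the tail by `2 K³ / Y` with `K = ∑ 1 / (n φ n)`;
the same divisor-sum bound for `1 / φ n`, now with `∑_{L ∣ n} n⁻² ≤ 2 / L²`, shows `K < ∞`.

Weights live in `ℝ≥0`, where `0⁻¹ = 0`, so indices with a zero entry contribute nothing; sums are
taken in `ℝ≥0∞`, where they can be exchanged freely.
-/

open Finset
open scoped NNReal ENNReal Nat

theorem inv_natCast_sq_eq_coe {L : ℕ} (hL : L ≠ 0) :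
    ((L : ℝ≥0∞) ^ 2)⁻¹ = (((L : ℝ≥0) ^ 2)⁻¹ : ℝ≥0) := by
  rw [ENNReal.coe_inv (by positivity)]; push_cast; rfl

theorem tsum_lt_inv_sq_le (t : ℝ≥0) :
    ∑' m : ℕ, (if t < m then ((m : ℝ≥0∞) ^ 2)⁻¹ else 0) ≤ ((2 / (⌊t⌋₊ + 1) : ℝ≥0) : ℝ≥0∞) := by
  refine ENNReal.tsum_le_of_sum_range_le fun M => ?_
  have hIoo : ∑ m ∈ Ioo ⌊t⌋₊ M, ((m : ℝ≥0) ^ 2)⁻¹ ≤ 2 / (⌊t⌋₊ + 1) := by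
    rw [← NNReal.coe_le_coe]
    push_cast
    exact sum_Ioo_inv_sq_le _ _
  calc ∑ m ∈ range M, (if t < m then ((m : ℝ≥0∞) ^ 2)⁻¹ else 0)
      = ∑ m ∈ (range M).filter (fun m : ℕ => t < m), ((m : ℝ≥0∞) ^ 2)⁻¹ :=
        (sum_filter _ _).symm
    _ ≤ ∑ m ∈ Ioo ⌊t⌋₊ M, ((m : ℝ≥0∞) ^ 2)⁻¹ := by
        refine sum_le_sum_of_subset fun m hm => ?_
        simp only [mem_filter, mem_range] at hm
        exact mem_Ioo.2 ⟨(Nat.floor_lt t.2).2 hm.2, hm.1⟩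
    _ = ((∑ m ∈ Ioo ⌊t⌋₊ M, ((m : ℝ≥0) ^ 2)⁻¹ : ℝ≥0) : ℝ≥0∞) := by
        rw [ENNReal.ofNNReal_finsetSum]
        exact sum_congr rfl fun m hm => inv_natCast_sq_eq_coe (Nat.ne_zero_of_lt (mem_Ioo.1 hm).1)
    _ ≤ _ := ENNReal.coe_le_coe.2 hIoo

theorem tsum_lt_dvd_inv_sq_eq (Y : ℝ≥0) {L : ℕ} (hL : L ≠ 0) :
    ∑' n : ℕ, (if Y < n ∧ L ∣ n then ((n : ℝ≥0∞) ^ 2)⁻¹ else 0) =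
      ((L : ℝ≥0∞) ^ 2)⁻¹ * ∑' m : ℕ, if Y / L < m then ((m : ℝ≥0∞) ^ 2)⁻¹ else 0 := by
  rw [← (mul_right_injective₀ hL).tsum_eq, ← ENNReal.tsum_mul_left]
  · refine tsum_congr fun m => ?_
    have hL' : (0 : ℝ≥0) < L := by positivity
    simp only [dvd_mul_right, and_true, Nat.cast_mul, mul_pow, div_lt_iff₀ hL', mul_comm (m : ℝ≥0)]
    split_ifs
    · exact ENNReal.mul_inv (by simp) (by simp)
    · simp
  · rintro n hn
    obtain ⟨m, rfl⟩ := (ite_ne_right_iff.1 hn).1.2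
    exact ⟨m, rfl⟩

-- Substituting `n = L m` turns the sum into `(L²)⁻¹ ∑_{m > Y / L} m⁻²`.
theorem tsum_lt_dvd_inv_sq_le (Y : ℝ≥0) (L : ℕ) {c : ℝ≥0}
    (hc : L ≠ 0 → ((L : ℝ≥0) ^ 2)⁻¹ * (2 / (⌊Y / L⌋₊ + 1)) ≤ c) :
    ∑' n : ℕ, (if Y < n ∧ L ∣ n then ((n : ℝ≥0∞) ^ 2)⁻¹ else 0) ≤ c := by
  rcases eq_or_ne L 0 with rfl | hL
  · refine (ENNReal.tsum_eq_zero.2 fun n => if_neg ?_).trans_le zero_le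
    rintro ⟨hn, h0⟩
    simp [zero_dvd_iff.1 h0] at hn
  rw [tsum_lt_dvd_inv_sq_eq Y hL, inv_natCast_sq_eq_coe hL]
  exact (mul_le_mul_right (tsum_lt_inv_sq_le _) _).trans (by exact_mod_cast hc hL)

theorem tsum_lt_dvd_inv_sq_le_inv_sq (Y : ℝ≥0) (L : ℕ) :
    ∑' n : ℕ, (if Y < n ∧ L ∣ n then ((n : ℝ≥0∞) ^ 2)⁻¹ else 0) ≤
      ((2 * ((L : ℝ≥0) ^ 2)⁻¹ : ℝ≥0) : ℝ≥0∞) :=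
  tsum_lt_dvd_inv_sq_le Y L fun _ => by
    rw [mul_comm 2]; gcongr; exact div_le_self zero_le le_add_self

theorem tsum_lt_dvd_inv_sq_le_inv {Y : ℝ≥0} (hY : Y ≠ 0) (L : ℕ) :
    ∑' n : ℕ, (if Y < n ∧ L ∣ n then ((n : ℝ≥0∞) ^ 2)⁻¹ else 0) ≤
      ((2 / Y * (L : ℝ≥0)⁻¹ : ℝ≥0) : ℝ≥0∞) :=
  tsum_lt_dvd_inv_sq_le Y L fun hL => by
    calc ((L : ℝ≥0) ^ 2)⁻¹ * (2 / (⌊Y / L⌋₊ + 1))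
        ≤ ((L : ℝ≥0) ^ 2)⁻¹ * (2 / (Y / L)) := by
          gcongr; exact (Nat.lt_floor_add_one _).le
      _ = 2 / Y * (L : ℝ≥0)⁻¹ := by field_simp

section DivisorSums

variable {T : Type*} (k : T → ℕ)

theorem tsum_inv_sq_mul_tsum_dvd_eq (w : T → ℝ≥0∞) (Y : ℝ≥0) :
    ∑' n : ℕ, (if Y < n then ((n : ℝ≥0∞) ^ 2)⁻¹ else 0) * ∑' t, (if k t ∣ n then w t else 0) =
      ∑' t, w t * ∑' n : ℕ, if Y < n ∧ k t ∣ n then ((n : ℝ≥0∞) ^ 2)⁻¹ else 0 := by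
  simp_rw [← ENNReal.tsum_mul_left]
  rw [ENNReal.tsum_comm]
  refine tsum_congr fun t => tsum_congr fun n => ?_
  split_ifs <;> simp_all [mul_comm]

theorem tsum_inv_sq_mul_tsum_dvd_le_inv_sq (w : T → ℝ≥0) (Y : ℝ≥0) :
    ∑' n : ℕ, (if Y < n then ((n : ℝ≥0∞) ^ 2)⁻¹ else 0) *
        ∑' t, (if k t ∣ n then (w t : ℝ≥0∞) else 0) ≤
      2 * ∑' t, ((w t * ((k t : ℝ≥0) ^ 2)⁻¹ : ℝ≥0) : ℝ≥0∞) := by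
  rw [tsum_inv_sq_mul_tsum_dvd_eq, ← ENNReal.tsum_mul_left]
  refine ENNReal.tsum_le_tsum fun t => ?_
  calc (w t : ℝ≥0∞) * _ ≤ w t * ((2 * ((k t : ℝ≥0) ^ 2)⁻¹ : ℝ≥0) : ℝ≥0∞) := by
        gcongr; exact tsum_lt_dvd_inv_sq_le_inv_sq Y (k t)
    _ = _ := by push_cast; ring

theorem tsum_inv_sq_mul_tsum_dvd_le_inv (w : T → ℝ≥0) {Y : ℝ≥0} (hY : Y ≠ 0) :
    ∑' n : ℕ, (if Y < n then ((n : ℝ≥0∞) ^ 2)⁻¹ else 0) *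
        ∑' t, (if k t ∣ n then (w t : ℝ≥0∞) else 0) ≤
      ((2 / Y : ℝ≥0) : ℝ≥0∞) * ∑' t, ((w t * (k t : ℝ≥0)⁻¹ : ℝ≥0) : ℝ≥0∞) := by
  rw [tsum_inv_sq_mul_tsum_dvd_eq, ← ENNReal.tsum_mul_left]
  refine ENNReal.tsum_le_tsum fun t => ?_
  calc (w t : ℝ≥0∞) * _ ≤ w t * ((2 / Y * (k t : ℝ≥0)⁻¹ : ℝ≥0) : ℝ≥0∞) := by
        gcongr; exact tsum_lt_dvd_inv_sq_le_inv hY (k t)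
    _ = _ := by rw [← ENNReal.coe_mul, ← ENNReal.coe_mul]; congr 1; ring

end DivisorSums

theorem natCast_le_totient_mul_sum_inv_totient (n : ℕ) :
    (n : ℝ≥0) ≤ φ n * ∑ d ∈ n.divisors, (φ d : ℝ≥0)⁻¹ := by
  rw [mul_sum]
  calc (n : ℝ≥0) = ∑ d ∈ n.divisors, (φ (n / d) : ℝ≥0) := by
        rw [Nat.sum_div_divisors n (fun d => (φ d : ℝ≥0))]; exact_mod_cast (Nat.sum_totient n).symm
    _ ≤ ∑ d ∈ n.divisors, φ n * (φ d : ℝ≥0)⁻¹ := sum_le_sum fun d hd => by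
        have hd' := Nat.dvd_of_mem_divisors hd
        rw [le_mul_inv_iff₀ (by simpa using Nat.pos_of_mem_divisors hd)]
        exact_mod_cast (Nat.totient_super_multiplicative _ _).trans_eq
          (congrArg φ (Nat.div_mul_cancel hd'))

theorem inv_totient_le_inv_mul_sum_inv_totient (n : ℕ) :
    (φ n : ℝ≥0)⁻¹ ≤ (n : ℝ≥0)⁻¹ * ∑ d ∈ n.divisors, (φ d : ℝ≥0)⁻¹ := by
  rcases eq_or_ne n 0 with rfl | hn
  · simp
  have hφ : (0 : ℝ≥0) < φ n := by simpa using hn.bot_lt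
  rw [le_inv_mul_iff₀ (by positivity), ← div_eq_mul_inv, div_le_iff₀ hφ, mul_comm]
  exact natCast_le_totient_mul_sum_inv_totient n

def gcdCofactors (p : ℕ × ℕ) : ℕ × ℕ × ℕ :=
  (p.1.gcd p.2, p.1 / p.1.gcd p.2, p.2 / p.1.gcd p.2)

theorem gcdCofactors_injective : Function.Injective gcdCofactors := by
  rintro ⟨d, e⟩ ⟨d', e'⟩ h
  simp only [gcdCofactors, Prod.mk.injEq] at h
  obtain ⟨hg, hd, he⟩ := h
  refine Prod.ext ?_ ?_
  · calc d = d.gcd e * (d / d.gcd e) := (Nat.mul_div_cancel' (Nat.gcd_dvd_left d e)).symm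
      _ = d'.gcd e' * (d' / d'.gcd e') := by rw [hd, hg]
      _ = d' := Nat.mul_div_cancel' (Nat.gcd_dvd_left d' e')
  · calc e = d.gcd e * (e / d.gcd e) := (Nat.mul_div_cancel' (Nat.gcd_dvd_right d e)).symm
      _ = d'.gcd e' * (e' / d'.gcd e') := by rw [he, hg]
      _ = e' := Nat.mul_div_cancel' (Nat.gcd_dvd_right d' e')

theorem gcdCofactors_prod (p : ℕ × ℕ) :
    (gcdCofactors p).1 * (gcdCofactors p).2.1 * (gcdCofactors p).2.2 = p.1.lcm p.2 := by
  simp only [gcdCofactors, Nat.lcm, Nat.mul_div_cancel' (Nat.gcd_dvd_left p.1 p.2),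
    Nat.mul_div_assoc p.1 (Nat.gcd_dvd_right p.1 p.2)]

theorem inv_totient_mul_inv_totient_le (p : ℕ × ℕ) :
    (φ p.1 : ℝ≥0)⁻¹ * (φ p.2 : ℝ≥0)⁻¹ ≤ ((φ (gcdCofactors p).1 : ℝ≥0) ^ 2 *
      φ (gcdCofactors p).2.1 * φ (gcdCofactors p).2.2)⁻¹ := by
  obtain ⟨d, e⟩ := p
  rcases eq_or_ne d 0 with rfl | hd
  · simp
  rcases eq_or_ne e 0 with rfl | he
  · simp
  simp only [gcdCofactors]
  set g := d.gcd e
  have hg : 0 < g := Nat.gcd_pos_of_pos_left e (Nat.pos_of_ne_zero hd)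
  have hsplit : ∀ m, m ≠ 0 → g ∣ m → 0 < φ g * φ (m / g) ∧ φ g * φ (m / g) ≤ φ m := fun m hm hgm =>
    ⟨Nat.mul_pos (Nat.totient_pos.2 hg) (Nat.totient_pos.2 (Nat.div_pos (Nat.le_of_dvd
      (Nat.pos_of_ne_zero hm) hgm) hg)),
    (Nat.totient_super_multiplicative _ _).trans_eq (congrArg φ (Nat.mul_div_cancel' hgm))⟩
  obtain ⟨hd0, hdle⟩ := hsplit d hd (Nat.gcd_dvd_left d e)
  obtain ⟨he0, hele⟩ := hsplit e he (Nat.gcd_dvd_right d e)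
  have heq : (φ g : ℝ≥0) ^ 2 * φ (d / g) * φ (e / g) =
      (φ g * φ (d / g) : ℕ) * (φ g * φ (e / g) : ℕ) := by
    push_cast; ring
  rw [← mul_inv, heq]
  exact inv_anti₀ (mul_pos (by exact_mod_cast hd0) (by exact_mod_cast he0))
    (mul_le_mul' (by exact_mod_cast hdle) (by exact_mod_cast hele))

theorem sq_sum_inv_totient_le_tsum (n : ℕ) :
    (((∑ d ∈ n.divisors, (φ d : ℝ≥0)⁻¹) ^ 2 : ℝ≥0) : ℝ≥0∞) ≤
      ∑' t : ℕ × ℕ × ℕ, if t.1 * t.2.1 * t.2.2 ∣ n then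
        ((((φ t.1 : ℝ≥0) ^ 2 * φ t.2.1 * φ t.2.2)⁻¹ : ℝ≥0) : ℝ≥0∞) else 0 := by
  set F : ℕ × ℕ × ℕ → ℝ≥0∞ := fun t => if t.1 * t.2.1 * t.2.2 ∣ n then
    ((((φ t.1 : ℝ≥0) ^ 2 * φ t.2.1 * φ t.2.2)⁻¹ : ℝ≥0) : ℝ≥0∞) else 0
  calc _ = ∑ p ∈ n.divisors ×ˢ n.divisors, (((φ p.1 : ℝ≥0)⁻¹ * (φ p.2 : ℝ≥0)⁻¹ : ℝ≥0) : ℝ≥0∞) := by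
        rw [sq, sum_mul_sum, ← sum_product', ENNReal.ofNNReal_finsetSum]
    _ ≤ ∑ p ∈ n.divisors ×ˢ n.divisors, F (gcdCofactors p) := sum_le_sum fun p hp => by
        obtain ⟨hd, he⟩ := mem_product.1 hp
        have hdvd := gcdCofactors_prod p ▸ Nat.lcm_dvd (Nat.dvd_of_mem_divisors hd)
          (Nat.dvd_of_mem_divisors he)
        simp only [F, if_pos hdvd]
        exact ENNReal.coe_le_coe.2 (inv_totient_mul_inv_totient_le p)
    _ ≤ ∑' p, F (gcdCofactors p) := ENNReal.sum_le_tsum _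
    _ ≤ ∑' t, F t := ENNReal.tsum_comp_le_tsum_of_injective gcdCofactors_injective F

theorem inv_totient_sq_le_inv_sq_mul_tsum_dvd {n : ℕ} (hn : n ≠ 0) :
    ((φ n : ℝ≥0∞) ^ 2)⁻¹ ≤ ((n : ℝ≥0∞) ^ 2)⁻¹ *
      ∑' t : ℕ × ℕ × ℕ, if t.1 * t.2.1 * t.2.2 ∣ n then
        ((((φ t.1 : ℝ≥0) ^ 2 * φ t.2.1 * φ t.2.2)⁻¹ : ℝ≥0) : ℝ≥0∞) else 0 := by
  set S := ∑ d ∈ n.divisors, (φ d : ℝ≥0)⁻¹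
  calc ((φ n : ℝ≥0∞) ^ 2)⁻¹ = (((φ n : ℝ≥0)⁻¹ ^ 2 : ℝ≥0) : ℝ≥0∞) := by
        rw [inv_natCast_sq_eq_coe (by simpa using hn), inv_pow]
    _ ≤ ((((n : ℝ≥0)⁻¹ * S) ^ 2 : ℝ≥0) : ℝ≥0∞) := by
        gcongr; exact inv_totient_le_inv_mul_sum_inv_totient n
    _ = ((n : ℝ≥0∞) ^ 2)⁻¹ * ((S ^ 2 : ℝ≥0) : ℝ≥0∞) := by
        rw [mul_pow, ENNReal.coe_mul, inv_pow, inv_natCast_sq_eq_coe hn]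
    _ ≤ _ := by gcongr; exact sq_sum_inv_totient_le_tsum n

theorem inv_mul_totient_le_inv_sq_mul_tsum_dvd (n : ℕ) :
    ((((n : ℝ≥0) * φ n)⁻¹ : ℝ≥0) : ℝ≥0∞) ≤ (if (0 : ℝ≥0) < n then ((n : ℝ≥0∞) ^ 2)⁻¹ else 0) *
      ∑' d : ℕ, if d ∣ n then (((φ d : ℝ≥0)⁻¹ : ℝ≥0) : ℝ≥0∞) else 0 := by
  rcases eq_or_ne n 0 with rfl | hn
  · simp
  set S := ∑ d ∈ n.divisors, (φ d : ℝ≥0)⁻¹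
  have hS : (S : ℝ≥0∞) ≤ ∑' d : ℕ, if d ∣ n then (((φ d : ℝ≥0)⁻¹ : ℝ≥0) : ℝ≥0∞) else 0 := by
    rw [ENNReal.ofNNReal_finsetSum]
    calc ∑ d ∈ n.divisors, (((φ d : ℝ≥0)⁻¹ : ℝ≥0) : ℝ≥0∞)
        = ∑ d ∈ n.divisors, if d ∣ n then (((φ d : ℝ≥0)⁻¹ : ℝ≥0) : ℝ≥0∞) else 0 :=
          sum_congr rfl fun d hd => (if_pos (Nat.dvd_of_mem_divisors hd)).symm
      _ ≤ _ := ENNReal.sum_le_tsum _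
  rw [if_pos (by positivity), inv_natCast_sq_eq_coe hn]
  calc ((((n : ℝ≥0) * φ n)⁻¹ : ℝ≥0) : ℝ≥0∞) ≤ ((((n : ℝ≥0) ^ 2)⁻¹ * S : ℝ≥0) : ℝ≥0∞) := by
        rw [mul_inv, sq, mul_inv, mul_assoc]
        gcongr
        exact inv_totient_le_inv_mul_sum_inv_totient n
    _ ≤ _ := by rw [ENNReal.coe_mul]; gcongr

theorem summable_inv_mul_totient : Summable fun n : ℕ => ((n : ℝ≥0) * φ n)⁻¹ := by
  have hsq : Summable fun d : ℕ => ((d : ℝ≥0) ^ 2)⁻¹ :=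
    NNReal.summable_coe.1 (by simp)
  rw [← ENNReal.tsum_coe_ne_top_iff_summable]
  refine ne_top_of_le_ne_top (b := 2 * ∑' d : ℕ, ((((d : ℝ≥0) ^ 2)⁻¹ : ℝ≥0) : ℝ≥0∞))
    (ENNReal.mul_ne_top (by simp) (ENNReal.tsum_coe_ne_top_iff_summable.2 hsq)) ?_
  calc ∑' n : ℕ, ((((n : ℝ≥0) * φ n)⁻¹ : ℝ≥0) : ℝ≥0∞)
      ≤ ∑' n : ℕ, (if (0 : ℝ≥0) < n then ((n : ℝ≥0∞) ^ 2)⁻¹ else 0) *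
          ∑' d : ℕ, if d ∣ n then (((φ d : ℝ≥0)⁻¹ : ℝ≥0) : ℝ≥0∞) else 0 :=
        ENNReal.tsum_le_tsum inv_mul_totient_le_inv_sq_mul_tsum_dvd
    _ ≤ 2 * ∑' d : ℕ, (((φ d : ℝ≥0)⁻¹ * ((d : ℝ≥0) ^ 2)⁻¹ : ℝ≥0) : ℝ≥0∞) :=
        tsum_inv_sq_mul_tsum_dvd_le_inv_sq (fun d => d) (fun d => (φ d : ℝ≥0)⁻¹) 0
    _ ≤ 2 * ∑' d : ℕ, ((((d : ℝ≥0) ^ 2)⁻¹ : ℝ≥0) : ℝ≥0∞) := by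
        gcongr with d
        exact mul_le_of_le_one_left zero_le (Nat.cast_inv_le_one _)

theorem inv_totient_sq_mul_inv_le (g a b : ℕ) :
    ((φ g : ℝ≥0) ^ 2 * φ a * φ b)⁻¹ * ((g * a * b : ℕ) : ℝ≥0)⁻¹ ≤
      ((g : ℝ≥0) * φ g)⁻¹ * ((a : ℝ≥0) * φ a)⁻¹ * ((b : ℝ≥0) * φ b)⁻¹ := by
  have hφg : ((φ g : ℝ≥0) ^ 2)⁻¹ ≤ (φ g : ℝ≥0)⁻¹ := by
    rw [← inv_pow]; exact pow_le_of_le_one zero_le (Nat.cast_inv_le_one _) two_ne_zero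
  calc _ = ((φ g : ℝ≥0) ^ 2)⁻¹ * ((g : ℝ≥0)⁻¹ * ((a : ℝ≥0) * φ a)⁻¹ * ((b : ℝ≥0) * φ b)⁻¹) := by
        push_cast; simp only [mul_inv]; ring
    _ ≤ (φ g : ℝ≥0)⁻¹ * ((g : ℝ≥0)⁻¹ * ((a : ℝ≥0) * φ a)⁻¹ * ((b : ℝ≥0) * φ b)⁻¹) := by gcongr
    _ = _ := by simp only [mul_inv]; ring

theorem tsum_lt_inv_totient_sq_le {Y : ℝ≥0} (hY : Y ≠ 0) :
    ∑' n : ℕ, (if Y < n then ((φ n : ℝ≥0∞) ^ 2)⁻¹ else 0) ≤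
      ((2 / Y * (∑' n : ℕ, ((n : ℝ≥0) * φ n)⁻¹) ^ 3 : ℝ≥0) : ℝ≥0∞) := by
  calc ∑' n : ℕ, (if Y < n then ((φ n : ℝ≥0∞) ^ 2)⁻¹ else 0)
      ≤ ∑' n : ℕ, (if Y < n then ((n : ℝ≥0∞) ^ 2)⁻¹ else 0) *
          ∑' t : ℕ × ℕ × ℕ, if t.1 * t.2.1 * t.2.2 ∣ n then
            ((((φ t.1 : ℝ≥0) ^ 2 * φ t.2.1 * φ t.2.2)⁻¹ : ℝ≥0) : ℝ≥0∞) else 0 := by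
        refine ENNReal.tsum_le_tsum fun n => ?_
        split_ifs with h
        · exact inv_totient_sq_le_inv_sq_mul_tsum_dvd (by rintro rfl; simp at h)
        · simp
    _ ≤ ((2 / Y : ℝ≥0) : ℝ≥0∞) * ∑' t : ℕ × ℕ × ℕ,
          (((((φ t.1 : ℝ≥0) ^ 2 * φ t.2.1 * φ t.2.2)⁻¹ *
            ((t.1 * t.2.1 * t.2.2 : ℕ) : ℝ≥0)⁻¹ : ℝ≥0)) : ℝ≥0∞) :=
        tsum_inv_sq_mul_tsum_dvd_le_inv _ _ hY
    _ ≤ ((2 / Y : ℝ≥0) : ℝ≥0∞) * ∑' t : ℕ × ℕ × ℕ, (((((t.1 : ℝ≥0) * φ t.1)⁻¹ *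
          ((t.2.1 : ℝ≥0) * φ t.2.1)⁻¹ * ((t.2.2 : ℝ≥0) * φ t.2.2)⁻¹ : ℝ≥0)) : ℝ≥0∞) :=
        mul_le_mul_right (ENNReal.tsum_le_tsum fun t =>
          ENNReal.coe_le_coe.2 (inv_totient_sq_mul_inv_le _ _ _)) _
    _ = _ := by
        rw [ENNReal.coe_mul, ENNReal.coe_pow, ENNReal.coe_tsum summable_inv_mul_totient]
        simp only [ENNReal.coe_mul, ENNReal.tsum_prod', ENNReal.tsum_mul_left,
          ENNReal.tsum_mul_right]
        ring

/-- There is `C > 0` with `∑_{n > Y} 1/φ(n)² ≤ C/Y` for all `Y > 1`. -/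
theorem statement9 :
    ∃ C : ℝ, 0 < C ∧ ∀ Y : ℝ, 1 < Y →
      ∑' n : {n : ℕ // Y < (n : ℝ)}, (1 : ℝ) / (((n : ℕ).totient : ℝ)) ^ 2 ≤ C / Y := by
  set K := ∑' n : ℕ, ((n : ℝ≥0) * φ n)⁻¹
  have hK : 0 < K := NNReal.tsum_pos summable_inv_mul_totient 1 (by simp)
  refine ⟨2 * K ^ 3, by positivity, fun Y hY => ?_⟩
  have hY0 : 0 < Y := zero_lt_one.trans hY
  have hsub : ∑' n : {n : ℕ // Y < (n : ℝ)}, ((φ n : ℝ≥0∞) ^ 2)⁻¹ =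
      ∑' n : ℕ, if Y.toNNReal < n then ((φ n : ℝ≥0∞) ^ 2)⁻¹ else 0 := by
    refine (tsum_subtype {n : ℕ | Y < n} fun n => ((φ n : ℝ≥0∞) ^ 2)⁻¹).trans
      (tsum_congr fun n => ?_)
    simp only [Set.indicator_apply, Set.mem_ofPred_eq, Real.toNNReal_lt_iff_lt_coe hY0.le,
      NNReal.coe_natCast]
  calc ∑' n : {n : ℕ // Y < (n : ℝ)}, (1 : ℝ) / (((n : ℕ).totient : ℝ)) ^ 2
      = (∑' n : {n : ℕ // Y < (n : ℝ)}, ((φ n : ℝ≥0∞) ^ 2)⁻¹).toReal := by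
        rw [ENNReal.tsum_toReal_eq fun n => ?_]
        · simp [one_div]
        · have : (0 : ℝ) < (n : ℕ) := hY0.trans n.2
          simpa using this.ne'
    _ ≤ ((2 / Y.toNNReal * K ^ 3 : ℝ≥0) : ℝ≥0∞).toReal :=
        ENNReal.toReal_mono ENNReal.coe_ne_top (hsub ▸
          tsum_lt_inv_totient_sq_le (by simpa using hY0))
    _ = 2 * K ^ 3 / Y := by
        simp only [ENNReal.coe_toReal, NNReal.coe_mul, NNReal.coe_div, NNReal.coe_pow,
          NNReal.coe_ofNat, Real.coe_toNNReal _ hY0.le]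
        ring
end

section
/- There exist constants c > 1 and c₁ > 0 such that for all real x ≥ 1: ∑_{n ≤ x} n/φ(n) ≤ c·x and ∑_{n ≤ x} n²/φ(n)² ≤ c₁·x, where the sums range over positive integers n ≤ x. -/
/-!
Since `n = ∑_{d ∣ n} φ d` and `φ d * φ (n / d) ≤ φ n`, we have `n / φ n ≤ ∑_{d ∣ n} 1 / φ d`.
Squaring and summing over `n ≤ N`, a pair of divisors `(d, e)` is counted
`⌊N / lcm d e⌋ ≤ N * gcd d e / (d * e)` times. Writing `gcd d e = ∑_{g ∣ gcd d e} φ g` and using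
`1 / φ (g * k) ≤ 1 / (φ g * φ k)`, the sum is at most `N * A ^ 3` with `A = ∑ 1 / (k * φ k)`,
which converges because `k ≤ 2 * φ k ^ 2`. The first sum is dominated by the second, as
`n / φ n ≥ 1`.
-/

open Finset
open scoped Nat

theorem le_totient_sq_of_odd {m : ℕ} (hm : Odd m) : m ≤ φ m ^ 2 := by
  induction m using Nat.recOnPosPrimePosCoprime with
  | zero => simp at hm
  | one => simp
  | prime_pow p k hp hk =>
    have hp3 : 3 ≤ p := by
      have : p ≠ 2 := by
        rintro rfl
        exact Nat.not_even_iff_odd.mpr hm ((Nat.even_pow' hk.ne').mpr even_two)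
      have := hp.two_le
      omega
    have hp_le : p ≤ (p - 1) ^ 2 := by
      obtain ⟨q, rfl⟩ : ∃ q, p = q + 3 := ⟨p - 3, by omega⟩
      rw [show q + 3 - 1 = q + 2 by omega]
      nlinarith
    rw [Nat.totient_prime_pow hp hk]
    calc p ^ k ≤ p ^ (k - 1) * p ^ (k - 1) * p := by
          rw [← pow_add, ← pow_succ]; exact Nat.pow_le_pow_right hp.pos (by omega)
      _ ≤ p ^ (k - 1) * p ^ (k - 1) * (p - 1) ^ 2 := Nat.mul_le_mul_left _ hp_le
      _ = (p ^ (k - 1) * (p - 1)) ^ 2 := by ring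
  | coprime a b _ _ hab iha ihb =>
    rw [Nat.odd_mul] at hm
    rw [Nat.totient_mul hab, mul_pow]
    exact Nat.mul_le_mul (iha hm.1) (ihb hm.2)

theorem two_pow_le_two_mul_totient_sq (k : ℕ) : 2 ^ k ≤ 2 * φ (2 ^ k) ^ 2 := by
  rcases Nat.eq_zero_or_pos k with rfl | hk
  · simp
  rw [Nat.totient_prime_pow Nat.prime_two hk, Nat.add_one_sub_one, mul_one, ← pow_mul,
    ← pow_succ']
  exact Nat.pow_le_pow_right two_pos (by omega)

theorem le_two_mul_totient_sq (m : ℕ) : m ≤ 2 * φ m ^ 2 := by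
  rcases eq_or_ne m 0 with rfl | hm
  · simp
  obtain ⟨k, t, ht, rfl⟩ := Nat.exists_eq_two_pow_mul_odd hm
  rw [Nat.totient_mul (Nat.Coprime.pow_left _ (Nat.coprime_two_left.mpr ht)), mul_pow,
    ← mul_assoc]
  exact Nat.mul_le_mul (two_pow_le_two_mul_totient_sq k) (le_totient_sq_of_odd ht)

theorem inv_totient_div_le_sqrt_two_mul (m : ℕ) :
    (φ m : ℝ)⁻¹ / m ≤ √2 * ((m : ℝ) ^ (3 / 2 : ℝ))⁻¹ := by
  rcases Nat.eq_zero_or_pos m with rfl | hm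
  · simp
  have hmR : (0 : ℝ) < m := by exact_mod_cast hm
  have hφ : (0 : ℝ) < φ m := by exact_mod_cast Nat.totient_pos.mpr hm
  have hsqrt : √(m : ℝ) ≤ √2 * φ m := by
    rw [← Real.sqrt_sq hφ.le, ← Real.sqrt_mul zero_le_two]
    exact Real.sqrt_le_sqrt (by exact_mod_cast le_two_mul_totient_sq m)
  have hpow : (m : ℝ) ^ (3 / 2 : ℝ) = m * √m := by
    rw [Real.sqrt_eq_rpow, ← Real.rpow_one_add' hmR.le (by norm_num)]
    norm_num
  rw [hpow, div_eq_inv_mul, ← mul_inv, ← div_eq_mul_inv, le_div_iff₀ (by positivity),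
    inv_mul_le_iff₀ (by positivity)]
  nlinarith

theorem summable_inv_totient_div : Summable fun m : ℕ => (φ m : ℝ)⁻¹ / m :=
  ((Real.summable_nat_rpow_inv.mpr (by norm_num)).mul_left √2).of_nonneg_of_le
    (fun _ => by positivity) inv_totient_div_le_sqrt_two_mul

theorem one_le_tsum_inv_totient_div : 1 ≤ ∑' k : ℕ, (φ k : ℝ)⁻¹ / k := by
  simpa using summable_inv_totient_div.le_tsum 1 fun _ _ => by positivity

theorem div_totient_le_sum_inv_totient (n : ℕ) :
    (n : ℝ) / φ n ≤ ∑ d ∈ n.divisors, (φ d : ℝ)⁻¹ := by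
  rcases Nat.eq_zero_or_pos n with rfl | hn
  · simp
  have hφ : (0 : ℝ) < φ n := by exact_mod_cast Nat.totient_pos.mpr hn
  calc (n : ℝ) / φ n = ∑ d ∈ n.divisors, (φ d : ℝ) / φ n := by
        rw [← sum_div, ← Nat.cast_sum, Nat.sum_totient]
    _ ≤ ∑ d ∈ n.divisors, (φ (n / d) : ℝ)⁻¹ := by
        refine sum_le_sum fun d hd => ?_
        have hdn := Nat.dvd_of_mem_divisors hd
        have hφ' : (0 : ℝ) < φ (n / d) := by
          exact_mod_cast Nat.totient_pos.mpr (Nat.div_pos (Nat.divisor_le hd)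
            (Nat.pos_of_mem_divisors hd))
        rw [div_le_iff₀ hφ, inv_mul_eq_div, le_div_iff₀ hφ']
        exact_mod_cast Nat.mul_div_cancel' hdn ▸ Nat.totient_super_multiplicative d (n / d)
    _ = ∑ d ∈ n.divisors, (φ d : ℝ)⁻¹ := Nat.sum_div_divisors n fun d => (φ d : ℝ)⁻¹

theorem inv_totient_mul_le (g k : ℕ) : (φ (g * k) : ℝ)⁻¹ ≤ (φ g : ℝ)⁻¹ * (φ k : ℝ)⁻¹ := by
  rcases Nat.eq_zero_or_pos g with rfl | hg
  · simp
  rcases Nat.eq_zero_or_pos k with rfl | hk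
  · simp
  rw [← mul_inv]
  refine inv_anti₀ (by positivity [Nat.totient_pos.mpr hg, Nat.totient_pos.mpr hk]) ?_
  exact_mod_cast Nat.totient_super_multiplicative g k

theorem sum_divisors_eq_sum_Icc_ite {M : Type*} [AddCommMonoid M] {n N : ℕ} (hn : n ∈ Icc 1 N)
    (f : ℕ → M) : ∑ d ∈ n.divisors, f d = ∑ d ∈ Icc 1 N, if d ∣ n then f d else 0 := by
  rw [← sum_filter]
  congr 1
  ext d
  simp only [mem_Icc, Nat.mem_divisors, mem_filter] at hn ⊢
  constructor
  · rintro ⟨hd, -⟩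
    exact ⟨⟨Nat.pos_of_dvd_of_pos hd hn.1, (Nat.le_of_dvd hn.1 hd).trans hn.2⟩, hd⟩
  · rintro ⟨-, hd⟩
    exact ⟨hd, by omega⟩

theorem card_filter_dvd_Icc (N m : ℕ) : #{n ∈ Icc 1 N | m ∣ n} = N / m :=
  Nat.Ioc_filter_dvd_card_eq_div N m

theorem sum_sq_sum_divisors_le (N : ℕ) {a : ℕ → ℝ} (ha : ∀ d, 0 ≤ a d) :
    ∑ n ∈ Icc 1 N, (∑ d ∈ n.divisors, a d) ^ 2 ≤
      N * ∑ d ∈ Icc 1 N, ∑ e ∈ Icc 1 N, (d.gcd e : ℝ) * (a d / d) * (a e / e) := by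
  calc ∑ n ∈ Icc 1 N, (∑ d ∈ n.divisors, a d) ^ 2
      = ∑ n ∈ Icc 1 N, ∑ d ∈ Icc 1 N, ∑ e ∈ Icc 1 N,
          if d.lcm e ∣ n then a d * a e else 0 := by
        refine sum_congr rfl fun n hn => ?_
        rw [sum_divisors_eq_sum_Icc_ite hn, sq, sum_mul_sum]
        refine sum_congr rfl fun d _ => sum_congr rfl fun e _ => ?_
        by_cases hd : d ∣ n <;> by_cases he : e ∣ n <;> simp [hd, he, Nat.lcm_dvd_iff]
    _ = ∑ d ∈ Icc 1 N, ∑ e ∈ Icc 1 N, ((N / d.lcm e : ℕ) : ℝ) * (a d * a e) := by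
        rw [sum_comm]
        refine sum_congr rfl fun d _ => ?_
        rw [sum_comm]
        refine sum_congr rfl fun e _ => ?_
        rw [← sum_filter, sum_const, nsmul_eq_mul, card_filter_dvd_Icc]
    _ ≤ ∑ d ∈ Icc 1 N, ∑ e ∈ Icc 1 N, N * ((d.gcd e : ℝ) * (a d / d) * (a e / e)) := by
        refine sum_le_sum fun d hd => sum_le_sum fun e he => ?_
        have hd0 : d ≠ 0 := Nat.one_le_iff_ne_zero.mp (mem_Icc.mp hd).1
        have he0 : e ≠ 0 := Nat.one_le_iff_ne_zero.mp (mem_Icc.mp he).1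
        have hlcm : (d.lcm e : ℝ) ≠ 0 := Nat.cast_ne_zero.mpr (Nat.lcm_ne_zero hd0 he0)
        have hgcd_lcm : (d.gcd e : ℝ) * d.lcm e = d * e := by exact_mod_cast Nat.gcd_mul_lcm d e
        calc ((N / d.lcm e : ℕ) : ℝ) * (a d * a e) ≤ N / d.lcm e * (a d * a e) := by
              gcongr
              · exact mul_nonneg (ha d) (ha e)
              · exact Nat.cast_div_le
          _ = N * ((d.gcd e : ℝ) * (a d / d) * (a e / e)) := by
              field_simp
              linear_combination -(N * a d * a e) * hgcd_lcm
    _ = N * ∑ d ∈ Icc 1 N, ∑ e ∈ Icc 1 N, (d.gcd e : ℝ) * (a d / d) * (a e / e) := by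
        simp only [mul_sum]

theorem sum_sum_gcd_mul_eq (N : ℕ) (b : ℕ → ℝ) :
    ∑ d ∈ Icc 1 N, ∑ e ∈ Icc 1 N, (d.gcd e : ℝ) * b d * b e =
      ∑ g ∈ Icc 1 N, φ g * (∑ d ∈ Icc 1 N, if g ∣ d then b d else 0) ^ 2 := by
  calc ∑ d ∈ Icc 1 N, ∑ e ∈ Icc 1 N, (d.gcd e : ℝ) * b d * b e
      = ∑ d ∈ Icc 1 N, ∑ e ∈ Icc 1 N, ∑ g ∈ Icc 1 N,
          if g ∣ d ∧ g ∣ e then φ g * b d * b e else 0 := by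
        refine sum_congr rfl fun d hd => sum_congr rfl fun e he => ?_
        have hgcd : d.gcd e ∈ Icc 1 N := by
          rw [mem_Icc] at hd ⊢
          exact ⟨Nat.gcd_pos_of_pos_left e hd.1, (Nat.gcd_le_left e hd.1).trans hd.2⟩
        rw [← Nat.sum_totient (d.gcd e), Nat.cast_sum, sum_divisors_eq_sum_Icc_ite hgcd,
          sum_mul, sum_mul]
        refine sum_congr rfl fun g _ => ?_
        simp only [Nat.dvd_gcd_iff]
        split_ifs <;> simp
    _ = ∑ g ∈ Icc 1 N, ∑ d ∈ Icc 1 N, ∑ e ∈ Icc 1 N,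
          if g ∣ d ∧ g ∣ e then φ g * b d * b e else 0 :=
        (sum_congr rfl fun _ _ => sum_comm).trans sum_comm
    _ = ∑ g ∈ Icc 1 N, φ g * (∑ d ∈ Icc 1 N, if g ∣ d then b d else 0) ^ 2 := by
        refine sum_congr rfl fun g _ => ?_
        rw [sq, sum_mul_sum, mul_sum]
        refine sum_congr rfl fun d _ => ?_
        rw [mul_sum]
        refine sum_congr rfl fun e _ => ?_
        by_cases hd : g ∣ d <;> by_cases he : g ∣ e <;> simp [hd, he, mul_assoc]

theorem sum_multiples_inv_totient_div_le (N g : ℕ) :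
    ∑ d ∈ Icc 1 N, (if g ∣ d then (φ d : ℝ)⁻¹ / d else 0) ≤
      (φ g : ℝ)⁻¹ / g * ∑' k : ℕ, (φ k : ℝ)⁻¹ / k := by
  have hsub : {d ∈ Icc 1 N | g ∣ d} ⊆ (Icc 1 N).image (g * ·) := by
    intro d hd
    simp only [mem_filter, mem_Icc] at hd
    obtain ⟨⟨hd1, hdN⟩, k, rfl⟩ := hd
    refine mem_image.mpr ⟨k, mem_Icc.mpr ⟨Nat.pos_of_mul_pos_left hd1, ?_⟩, rfl⟩
    exact (Nat.le_mul_of_pos_left k (Nat.pos_of_mul_pos_right hd1)).trans hdN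
  rw [← sum_filter]
  calc ∑ d ∈ Icc 1 N with g ∣ d, (φ d : ℝ)⁻¹ / d
      ≤ ∑ d ∈ (Icc 1 N).image (g * ·), (φ d : ℝ)⁻¹ / d :=
        sum_le_sum_of_subset_of_nonneg hsub fun _ _ _ => by positivity
    _ ≤ ∑ k ∈ Icc 1 N, (φ (g * k) : ℝ)⁻¹ / (g * k : ℕ) :=
        sum_image_le_of_nonneg fun _ _ => by positivity
    _ ≤ ∑ k ∈ Icc 1 N, (φ g : ℝ)⁻¹ / g * ((φ k : ℝ)⁻¹ / k) := by
        refine sum_le_sum fun k _ => ?_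
        rw [div_mul_div_comm, Nat.cast_mul]
        gcongr
        exact inv_totient_mul_le g k
    _ ≤ (φ g : ℝ)⁻¹ / g * ∑' k : ℕ, (φ k : ℝ)⁻¹ / k := by
        rw [← mul_sum]
        gcongr
        exact summable_inv_totient_div.sum_le_tsum _ fun _ _ => by positivity

theorem totient_mul_inv_totient_div_sq_le (g : ℕ) :
    φ g * ((φ g : ℝ)⁻¹ / g) ^ 2 ≤ (φ g : ℝ)⁻¹ / g := by
  rcases Nat.eq_zero_or_pos g with rfl | hg
  · simp
  have hφ : (0 : ℝ) < φ g := by exact_mod_cast Nat.totient_pos.mpr hg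
  have hg1 : (1 : ℝ) ≤ g := by exact_mod_cast hg
  calc φ g * ((φ g : ℝ)⁻¹ / g) ^ 2 = (φ g : ℝ)⁻¹ / g * (g : ℝ)⁻¹ := by field_simp
    _ ≤ (φ g : ℝ)⁻¹ / g := mul_le_of_le_one_right (by positivity) (inv_le_one_of_one_le₀ hg1)

theorem sum_sq_div_totient_sq_le (N : ℕ) :
    ∑ n ∈ Icc 1 N, (n : ℝ) ^ 2 / (φ n : ℝ) ^ 2 ≤ (∑' k : ℕ, (φ k : ℝ)⁻¹ / k) ^ 3 * N := by
  set A := ∑' k : ℕ, (φ k : ℝ)⁻¹ / k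
  have hA : 0 ≤ A := tsum_nonneg fun _ => by positivity
  calc ∑ n ∈ Icc 1 N, (n : ℝ) ^ 2 / (φ n : ℝ) ^ 2
      ≤ ∑ n ∈ Icc 1 N, (∑ d ∈ n.divisors, (φ d : ℝ)⁻¹) ^ 2 := by
        refine sum_le_sum fun n _ => ?_
        rw [← div_pow]
        exact pow_le_pow_left₀ (by positivity) (div_totient_le_sum_inv_totient n) 2
    _ ≤ N * ∑ g ∈ Icc 1 N,
          φ g * (∑ d ∈ Icc 1 N, if g ∣ d then (φ d : ℝ)⁻¹ / d else 0) ^ 2 := by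
        rw [← sum_sum_gcd_mul_eq]
        exact sum_sq_sum_divisors_le N fun _ => by positivity
    _ ≤ N * ∑ g ∈ Icc 1 N, φ g * ((φ g : ℝ)⁻¹ / g * A) ^ 2 := by
        gcongr with g
        exact sum_multiples_inv_totient_div_le N g
    _ ≤ N * ∑ g ∈ Icc 1 N, (φ g : ℝ)⁻¹ / g * A ^ 2 := by
        refine mul_le_mul_of_nonneg_left (sum_le_sum fun g _ => ?_) (Nat.cast_nonneg N)
        rw [mul_pow, ← mul_assoc]
        gcongr
        exact totient_mul_inv_totient_div_sq_le g
    _ ≤ N * (A * A ^ 2) := by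
        rw [← sum_mul]
        gcongr
        exact summable_inv_totient_div.sum_le_tsum _ fun _ _ => by positivity
    _ = A ^ 3 * N := by ring

theorem div_totient_le_sq_div_totient_sq {n : ℕ} (hn : 1 ≤ n) :
    (n : ℝ) / φ n ≤ (n : ℝ) ^ 2 / (φ n : ℝ) ^ 2 := by
  have hφ : (0 : ℝ) < φ n := by exact_mod_cast Nat.totient_pos.mpr hn
  rw [← div_pow]
  exact le_self_pow₀ ((one_le_div hφ).mpr (by exact_mod_cast Nat.totient_le n)) two_ne_zero

/-- There are constants `c > 1` and `c₁ > 0` with `∑_{n ≤ x} n/φ(n) ≤ c·x` and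
`∑_{n ≤ x} n²/φ(n)² ≤ c₁·x` for all real `x ≥ 1`. -/
theorem statement10 :
    ∃ c c₁ : ℝ, 1 < c ∧ 0 < c₁ ∧ ∀ x : ℝ, 1 ≤ x →
      (∑ n ∈ Finset.Icc 1 ⌊x⌋₊, ((n : ℝ) / (n.totient : ℝ)) ≤ c * x) ∧
      (∑ n ∈ Finset.Icc 1 ⌊x⌋₊, ((n : ℝ) ^ 2 / ((n.totient : ℝ)) ^ 2) ≤ c₁ * x) := by
  set A := ∑' k : ℕ, (φ k : ℝ)⁻¹ / k
  have hA : 1 ≤ A ^ 3 := one_le_pow₀ one_le_tsum_inv_totient_div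
  refine ⟨A ^ 3 + 1, A ^ 3, by linarith, by linarith, fun x hx => ?_⟩
  have hsq : ∑ n ∈ Icc 1 ⌊x⌋₊, (n : ℝ) ^ 2 / (φ n : ℝ) ^ 2 ≤ A ^ 3 * x :=
    (sum_sq_div_totient_sq_le _).trans (by gcongr; exact Nat.floor_le (by linarith))
  refine ⟨?_, hsq⟩
  calc ∑ n ∈ Icc 1 ⌊x⌋₊, (n : ℝ) / φ n
      ≤ ∑ n ∈ Icc 1 ⌊x⌋₊, (n : ℝ) ^ 2 / (φ n : ℝ) ^ 2 :=
        sum_le_sum fun n hn => div_totient_le_sq_div_totient_sq (mem_Icc.mp hn).1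
    _ ≤ A ^ 3 * x := hsq
    _ ≤ (A ^ 3 + 1) * x := by linarith
end

section
/- The arithmetic function H defined by H(n) = ∑_{d ∣ n} #{k : 1 ≤ k ≤ d, d ∣ k²} is multiplicative, and for every prime p and every integer k ≥ 1 one has H(p^{2k}) = 2·σ(p^{k−1}) + p^k and H(p^{2k−1}) = 2·σ(p^{k−1}). -/
/-!
Write `H = ζ * h` with `h(d) = #{k ∈ [1, d] | d ∣ k²}`. Since `k ↦ k mod d` is a bijection from
`[1, d]` onto `ZMod d`, `h(d)` counts the `x : ZMod d` with `x² = 0`, and the Chinese remainder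
theorem makes `h`, hence `H`, multiplicative. At a prime power, `p^e ∣ k²` iff `p^⌈e/2⌉ ∣ k`, so
`h(p^e) = p^⌊e/2⌋` and `H(p^m) = ∑_{e ≤ m} p^⌊e/2⌋`, in which every power `p^i` occurs twice.
-/

open Finset ArithmeticFunction
open scoped ArithmeticFunction.zeta

/-- The arithmetic function `H(n) = ∑_{d ∣ n} #{k : 1 ≤ k ≤ d, d ∣ k²}`. -/
def Hfun (n : ℕ) : ℕ :=
  ∑ d ∈ n.divisors, ((Finset.Icc 1 d).filter fun k => d ∣ k ^ 2).card

lemma card_filter_Icc_one_eq_card_filter_range {P : ℕ → Prop} [DecidablePred P] {d : ℕ}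
    (hd : d ≠ 0) (hP : P d ↔ P 0) : #{k ∈ Icc 1 d | P k} = #{k ∈ range d | P k} := by
  have hIcc : Icc 1 d = insert d (Ico 1 d) := (Ico_insert_right (by omega)).symm
  have hrange : range d = insert 0 (Ico 1 d) := by
    rw [range_eq_Ico, ← insert_Ico_add_one_left_eq_Ico (by omega), zero_add]
  rw [hIcc, hrange, filter_insert, filter_insert]
  by_cases h0 : P 0
  · rw [if_pos (hP.mpr h0), if_pos h0, card_insert_of_notMem (by simp),
      card_insert_of_notMem (by simp)]
  · rw [if_neg (mt hP.mp h0), if_neg h0]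

lemma card_filter_range_dvd_sq_eq_card (d : ℕ) [NeZero d] :
    #{k ∈ range d | d ∣ k ^ 2} = Nat.card {x : ZMod d // x ^ 2 = 0} := by
  rw [Nat.card_eq_fintype_card, Fintype.card_subtype]
  refine card_nbij' (fun k => (k : ZMod d)) (fun x => x.val) ?_ ?_ ?_ ?_
  · intro k hk
    simp only [coe_filter, mem_range] at hk
    simp only [coe_filter, mem_univ, true_and, Set.mem_ofPred_eq]
    rw [← Nat.cast_pow, ZMod.natCast_eq_zero_iff]
    exact hk.2
  · intro x hx
    simp only [coe_filter, mem_univ, true_and] at hx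
    simp only [coe_filter, mem_range, Set.mem_ofPred_eq]
    refine ⟨ZMod.val_lt x, ?_⟩
    rwa [← ZMod.natCast_eq_zero_iff, Nat.cast_pow, ZMod.natCast_val, ZMod.cast_id]
  · intro k hk
    simp only [coe_filter, mem_range] at hk
    exact ZMod.val_cast_of_lt hk.1
  · intro x _
    exact ZMod.natCast_rightInverse x

lemma RingEquiv.card_sq_eq_zero {R S : Type*} [Semiring R] [Semiring S] (e : R ≃+* S) :
    Nat.card {x : R // x ^ 2 = 0} = Nat.card {y : S // y ^ 2 = 0} :=
  Nat.card_congr <| e.toEquiv.subtypeEquiv fun x => by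
    simp only [RingEquiv.toEquiv_eq_coe, EquivLike.coe_coe, ← map_pow,
      map_eq_zero_iff e e.injective]

lemma Prod.card_sq_eq_zero (R S : Type*) [MonoidWithZero R] [MonoidWithZero S] :
    Nat.card {x : R × S // x ^ 2 = 0} =
      Nat.card {x : R // x ^ 2 = 0} * Nat.card {y : S // y ^ 2 = 0} := by
  rw [← Nat.card_prod]
  exact Nat.card_congr <|
    (Equiv.subtypeEquivRight fun x => by rw [Prod.pow_def, Prod.mk_eq_zero]).trans
      Equiv.subtypeProdEquivProd

def dvdSqCount : ArithmeticFunction ℕ :=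
  ⟨fun d => #{k ∈ Icc 1 d | d ∣ k ^ 2}, by simp⟩

lemma dvdSqCount_apply (d : ℕ) : dvdSqCount d = #{k ∈ Icc 1 d | d ∣ k ^ 2} := rfl

lemma dvdSqCount_eq_card_sq_eq_zero (d : ℕ) [NeZero d] :
    dvdSqCount d = Nat.card {x : ZMod d // x ^ 2 = 0} := by
  rw [dvdSqCount_apply, card_filter_Icc_one_eq_card_filter_range (NeZero.ne d) (by simp),
    card_filter_range_dvd_sq_eq_card]

lemma isMultiplicative_dvdSqCount : dvdSqCount.IsMultiplicative := by
  refine IsMultiplicative.iff_ne_zero.mpr ⟨rfl, fun {m n} hm hn hmn => ?_⟩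
  have : NeZero m := ⟨hm⟩
  have : NeZero n := ⟨hn⟩
  rw [dvdSqCount_eq_card_sq_eq_zero, dvdSqCount_eq_card_sq_eq_zero, dvdSqCount_eq_card_sq_eq_zero,
    (ZMod.chineseRemainder hmn).card_sq_eq_zero, Prod.card_sq_eq_zero]

lemma Hfun_eq_zeta_mul_dvdSqCount (n : ℕ) : Hfun n = (ζ * dvdSqCount) n :=
  (zeta_mul_apply (f := dvdSqCount) (x := n)).symm

lemma Nat.Prime.pow_dvd_sq_iff {p : ℕ} (hp : p.Prime) (e k : ℕ) :
    p ^ e ∣ k ^ 2 ↔ p ^ ((e + 1) / 2) ∣ k := by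
  rcases eq_or_ne k 0 with rfl | hk
  · simp
  rw [hp.pow_dvd_iff_le_factorization (pow_ne_zero 2 hk), hp.pow_dvd_iff_le_factorization hk,
    Nat.factorization_pow, Finsupp.smul_apply, smul_eq_mul]
  omega

lemma dvdSqCount_prime_pow {p : ℕ} (hp : p.Prime) (e : ℕ) :
    dvdSqCount (p ^ e) = p ^ (e / 2) := by
  change #{k ∈ Ioc 0 (p ^ e) | p ^ e ∣ k ^ 2} = _
  rw [filter_congr fun k _ => hp.pow_dvd_sq_iff e k,
    Nat.Ioc_filter_dvd_card_eq_div, Nat.pow_div (by omega) hp.pos]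
  congr 1
  omega

lemma Hfun_prime_pow {p : ℕ} (hp : p.Prime) (m : ℕ) :
    Hfun (p ^ m) = ∑ e ∈ range (m + 1), p ^ (e / 2) := by
  rw [Hfun, Nat.sum_divisors_prime_pow hp]
  exact sum_congr rfl fun e _ => dvdSqCount_prime_pow hp e

lemma Finset.sum_range_two_mul_div_two {M : Type*} [AddCommMonoid M] (f : ℕ → M) (n : ℕ) :
    ∑ e ∈ range (2 * n), f (e / 2) = 2 • ∑ i ∈ range n, f i := by
  induction n with
  | zero => simp
  | succ n ih =>
    rw [Nat.mul_succ, sum_range_succ, sum_range_succ, ih, sum_range_succ, smul_add,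
      show (2 * n + 1) / 2 = n by omega, Nat.mul_div_cancel_left n two_pos, add_assoc,
      ← two_nsmul]

/-- `H` is multiplicative, and `H(p^{2k}) = 2σ(p^{k-1}) + p^k`, `H(p^{2k-1}) = 2σ(p^{k-1})`
for every prime `p` and `k ≥ 1`. -/
theorem statement12 :
    (∀ m n : ℕ, Nat.Coprime m n → Hfun (m * n) = Hfun m * Hfun n) ∧
    ∀ p : ℕ, p.Prime → ∀ k : ℕ, 1 ≤ k →
      Hfun (p ^ (2 * k)) = 2 * (∑ d ∈ (p ^ (k - 1)).divisors, d) + p ^ k ∧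
      Hfun (p ^ (2 * k - 1)) = 2 * (∑ d ∈ (p ^ (k - 1)).divisors, d) := by
  refine ⟨fun m n hmn => ?_, fun p hp k hk => ?_⟩
  · simp only [Hfun_eq_zeta_mul_dvdSqCount]
    exact (isMultiplicative_zeta.mul isMultiplicative_dvdSqCount).map_mul_of_coprime hmn
  have hσ : ∑ d ∈ (p ^ (k - 1)).divisors, d = ∑ i ∈ range k, p ^ i := by
    rw [Nat.sum_divisors_prime_pow hp, Nat.sub_add_cancel hk]
  rw [hσ, Hfun_prime_pow hp, Hfun_prime_pow hp, Nat.sub_add_cancel (by omega), sum_range_succ,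
    sum_range_two_mul_div_two, Nat.mul_div_cancel_left k two_pos, smul_eq_mul]
  exact ⟨rfl, rfl⟩
end

section
/- Let n = ∏_{i=1}^r p_i^{α_i} be the prime factorization of an integer n ≥ 2 (distinct primes p_i, exponents α_i ≥ 1). Then 2^r·σ(∏_{i=1}^r p_i^{⌈α_i/2⌉−1}) ≤ H(n) ≤ 2^r·σ(∏_{i=1}^r p_i^{⌊α_i/2⌋}). In particular, H(n) < n² for every integer n ≥ 2. -/
open Finset ArithmeticFunction ArithmeticFunction.zeta

section SquareDivisibility

variable {d k : ℕ}

theorem dvd_sq_iff_dvd (hd : d ≠ 0) (hk : k ≠ 0) :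
    d ∣ k ^ 2 ↔ (d.factorization.mapRange (fun e => (e + 1) / 2) rfl).prod (· ^ ·) ∣ k := by
  have hprime : ∀ p ∈ (d.factorization.mapRange (fun e => (e + 1) / 2) rfl).support,
      p.Prime :=
    fun p hp => Nat.prime_of_mem_primeFactors (Finsupp.support_mapRange hp)
  have hc0 : (d.factorization.mapRange (fun e => (e + 1) / 2) rfl).prod (· ^ ·) ≠ 0 :=
    Finsupp.prod_ne_zero_iff.mpr fun p hp => pow_ne_zero _ (hprime p hp).ne_zero
  rw [← Nat.factorization_le_iff_dvd hd (pow_ne_zero 2 hk),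
    ← Nat.factorization_le_iff_dvd hc0 hk, Nat.prod_pow_factorization_eq_self hprime,
    Finsupp.le_def, Finsupp.le_def]
  refine forall_congr' fun p => ?_
  simp only [Nat.factorization_pow, Finsupp.smul_apply, smul_eq_mul, Finsupp.mapRange_apply]
  omega

theorem card_filter_dvd_sq (hd : d ≠ 0) :
    #{k ∈ Icc 1 d | d ∣ k ^ 2} = d.factorization.prod fun p e => p ^ (e / 2) := by
  set c := (d.factorization.mapRange (fun e => (e + 1) / 2) rfl).prod (· ^ ·) with hc_def
  have hc : c * (d.factorization.prod fun p e => p ^ (e / 2)) = d := by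
    rw [hc_def, Finsupp.prod_mapRange_index fun _ => pow_zero _, ← Finsupp.prod_mul]
    conv_rhs => rw [← Nat.prod_factorization_pow_eq_self hd]
    exact Finsupp.prod_congr fun p _ => by rw [← pow_add]; congr 1; omega
  have hc0 : c ≠ 0 := left_ne_zero_of_mul (hc.trans_ne hd)
  rw [filter_congr fun k hk => dvd_sq_iff_dvd hd (by grind), show Icc 1 d = Ioc 0 d from rfl,
    Nat.Ioc_filter_dvd_card_eq_div]
  exact Nat.div_eq_of_eq_mul_right (Nat.pos_of_ne_zero hc0) hc.symm

end SquareDivisibility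

def sqDvdCount : ArithmeticFunction ℕ :=
  ⟨fun d => #{k ∈ Icc 1 d | d ∣ k ^ 2}, rfl⟩

theorem sqDvdCount_apply {d : ℕ} (hd : d ≠ 0) :
    sqDvdCount d = d.factorization.prod fun p e => p ^ (e / 2) :=
  card_filter_dvd_sq hd

theorem isMultiplicative_sqDvdCount : sqDvdCount.IsMultiplicative := by
  refine IsMultiplicative.iff_ne_zero.mpr ⟨rfl, fun {m n} hm hn hmn => ?_⟩
  rw [sqDvdCount_apply (mul_ne_zero hm hn), sqDvdCount_apply hm, sqDvdCount_apply hn,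
    Nat.factorization_mul_of_coprime hmn,
    Finsupp.prod_add_index_of_disjoint hmn.disjoint_primeFactors]

theorem sqDvdCount_prime_pow {p : ℕ} (hp : p.Prime) (a : ℕ) :
    sqDvdCount (p ^ a) = p ^ (a / 2) := by
  rw [sqDvdCount_apply (pow_ne_zero a hp.ne_zero), hp.factorization_pow,
    Finsupp.prod_single_index (by simp)]

theorem Hfun_eq_factorization_prod {n : ℕ} (hn : n ≠ 0) :
    Hfun n = n.factorization.prod fun p a => ∑ i ∈ range (a + 1), p ^ (i / 2) := by
  have hmul : (ζ * sqDvdCount).IsMultiplicative :=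
    isMultiplicative_zeta.mul isMultiplicative_sqDvdCount
  rw [show Hfun n = (ζ * sqDvdCount) n by rw [zeta_mul_apply]; rfl,
    hmul.multiplicative_factorization _ hn]
  refine Finsupp.prod_congr fun p hp => ?_
  have hp : p.Prime := Nat.prime_of_mem_primeFactors hp
  rw [zeta_mul_apply, Nat.sum_divisors_prime_pow hp]
  exact sum_congr rfl fun i _ => sqDvdCount_prime_pow hp i

theorem sum_divisors_prod_pow (s : Finset ℕ) (hs : ∀ p ∈ s, p.Prime) (e : ℕ → ℕ) :
    ∑ d ∈ (∏ p ∈ s, p ^ e p).divisors, d = ∏ p ∈ s, ∑ i ∈ range (e p + 1), p ^ i := by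
  rw [← sigma_one_apply, isMultiplicative_sigma.map_prod _ _ fun p hp q hq hpq =>
    Nat.coprime_pow_primes _ _ (hs p hp) (hs q hq) hpq]
  exact prod_congr rfl fun p hp => sigma_one_apply_prime_pow (hs p hp)

section PrimePowerBounds

variable (p : ℕ) {a : ℕ}

theorem sum_range_pow_div_two (a : ℕ) :
    ∑ i ∈ range (a + 1), p ^ (i / 2) =
      ∑ i ∈ range ((a + 1) / 2), p ^ i + ∑ i ∈ range (a / 2 + 1), p ^ i := by
  induction a using Nat.twoStepInduction with
  | zero => simp
  | one => simp [sum_range_succ]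
  | more a ih =>
    rw [sum_range_succ, sum_range_succ, ih, show (a + 2 + 1) / 2 = (a + 1) / 2 + 1 by omega,
      show (a + 2) / 2 = a / 2 + 1 by omega, sum_range_succ _ ((a + 1) / 2),
      sum_range_succ _ (a / 2 + 1)]
    ring

theorem two_mul_sum_range_le_sum_range_pow_div_two (ha : a ≠ 0) :
    2 * ∑ i ∈ range ((a + 1) / 2 - 1 + 1), p ^ i ≤ ∑ i ∈ range (a + 1), p ^ (i / 2) := by
  rw [sum_range_pow_div_two, Nat.sub_add_cancel (by omega), two_mul]
  exact Nat.add_le_add_left (sum_le_sum_of_subset (range_subset_range.mpr (by omega))) _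

theorem sum_range_pow_div_two_le (a : ℕ) :
    ∑ i ∈ range (a + 1), p ^ (i / 2) ≤ 2 * ∑ i ∈ range (a / 2 + 1), p ^ i := by
  rw [sum_range_pow_div_two, two_mul]
  exact Nat.add_le_add_right (sum_le_sum_of_subset (range_subset_range.mpr (by omega))) _

variable {p}

theorem two_mul_sum_range_lt_pow (hp : 2 ≤ p) (ha : a ≠ 0) :
    2 * ∑ i ∈ range (a / 2 + 1), p ^ i < p ^ (2 * a) :=
  calc 2 * ∑ i ∈ range (a / 2 + 1), p ^ i
      < 2 * p ^ (a / 2 + 1) := by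
        gcongr; exact Nat.geomSum_lt hp fun i hi => mem_range.mp hi
    _ ≤ p * p ^ (a / 2 + 1) := by gcongr
    _ = p ^ (a / 2 + 2) := by ring
    _ ≤ p ^ (2 * a) := Nat.pow_le_pow_right (by omega) (by omega)

end PrimePowerBounds

theorem sq_eq_prod_primeFactors_pow {n : ℕ} (hn : n ≠ 0) :
    n ^ 2 = ∏ p ∈ n.primeFactors, p ^ (2 * n.factorization p) := by
  conv_lhs => rw [← Nat.prod_factorization_pow_eq_self hn]
  rw [Finsupp.prod, Nat.support_factorization, ← prod_pow]
  exact prod_congr rfl fun p _ => by rw [← pow_mul, mul_comm]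

/-- For `n ≥ 2` with `r` distinct prime factors `p` of multiplicity `α_p`,
`2^r·σ(∏ p^(⌈α_p/2⌉-1)) ≤ H(n) ≤ 2^r·σ(∏ p^(⌊α_p/2⌋))`; in particular `H(n) < n²`. -/
theorem statement13 (n : ℕ) (hn : 2 ≤ n) :
    2 ^ n.primeFactors.card *
        (∑ d ∈ (∏ p ∈ n.primeFactors, p ^ ((n.factorization p + 1) / 2 - 1)).divisors, d) ≤
      Hfun n ∧
    Hfun n ≤ 2 ^ n.primeFactors.card *
        (∑ d ∈ (∏ p ∈ n.primeFactors, p ^ (n.factorization p / 2)).divisors, d) ∧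
    Hfun n < n ^ 2 := by
  have hn0 : n ≠ 0 := by omega
  have hprime : ∀ p ∈ n.primeFactors, p.Prime := fun p => Nat.prime_of_mem_primeFactors
  have hpos : ∀ p ∈ n.primeFactors, n.factorization p ≠ 0 := fun p hp =>
    Finsupp.mem_support_iff.mp (by rwa [Nat.support_factorization])
  have hH : Hfun n =
      ∏ p ∈ n.primeFactors, ∑ i ∈ range (n.factorization p + 1), p ^ (i / 2) := by
    rw [Hfun_eq_factorization_prod hn0, Finsupp.prod, Nat.support_factorization]
  have hupper : Hfun n ≤
      ∏ p ∈ n.primeFactors, 2 * ∑ i ∈ range (n.factorization p / 2 + 1), p ^ i :=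
    hH ▸ prod_le_prod' fun p _ => sum_range_pow_div_two_le p _
  rw [sum_divisors_prod_pow _ hprime, sum_divisors_prod_pow _ hprime, pow_card_mul_prod,
    pow_card_mul_prod]
  refine ⟨hH ▸ prod_le_prod' fun p hp =>
    two_mul_sum_range_le_sum_range_pow_div_two p (hpos p hp), hupper, hupper.trans_lt ?_⟩
  rw [sq_eq_prod_primeFactors_pow hn0]
  refine prod_lt_prod_of_nonempty (fun p hp => ?_) (fun p hp => ?_)
    (Nat.nonempty_primeFactors.mpr hn)
  · exact Nat.mul_pos two_pos
      (sum_pos (fun i _ => pow_pos (hprime p hp).pos i) nonempty_range_add_one)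
  · exact two_mul_sum_range_lt_pow (hprime p hp).two_le (hpos p hp)
end

section
/- Let p be a prime, k ≥ 1 an integer, D an integer, and let a be an integer coprime to p. Then the number of triples (α, β, γ) ∈ (ℤ/p^kℤ)³ satisfying (αβ + 1)² + D·(βγ)² ≡ a (mod p^k) is at most 2k·η(p^k)·p^{2k}, where η(p^k) = 4 if p = 2 and k ≥ 3, and η(p^k) = 2 otherwise. -/
/-!
Split the count according to `β`. If `β` is a unit, `(α, γ) ↦ (αβ + 1, βγ)` embeds the
solutions into the conic `w² + D v² = a`. A unit has at most `η` square roots, so the conic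
has at most `η` points with `w` a unit over each `v`, and at most `η` points over each of the
`p^(k-1)` nonunits `w`, since there `D v² = a - w²` is a unit. Summed over the `φ(p^k)` units
`β` this gives at most `η p^(2k)`. If `β` is not a unit, then `αβ + 1` is a unit square root
of `a - D (βγ)²`, and `αβ` determines `α` up to `gcd(p^k, β)` choices; summed over `γ` and over
the nonunits `β` this gives at most `k η p^(2k)`, because `∑ gcd(p^k, β) ≤ k p^k`.
-/

open Finset

theorem IsLocalRing.isUnit_sub_of_not_isUnit {R : Type*} [CommRing R] [IsLocalRing R] {a b : R}
    (ha : IsUnit a) (hb : ¬ IsUnit b) : IsUnit (a - b) :=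
  (isUnit_or_isUnit_of_isUnit_add (a := a - b) (b := b) (by rwa [sub_add_cancel])).resolve_right hb

theorem IsLocalRing.eq_or_eq_neg_of_sq_eq_sq {R : Type*} [CommRing R] [IsLocalRing R] {x y : R}
    (h2 : IsUnit (2 : R)) (hy : IsUnit y) (h : x ^ 2 = y ^ 2) : x = y ∨ x = -y := by
  have hx : IsUnit x := (isUnit_pow_iff two_ne_zero).mp (h ▸ hy.pow 2)
  have hsum : IsUnit ((x - y) + (x + y)) := by
    rw [show (x - y) + (x + y) = 2 * x by ring]
    exact h2.mul hx
  rcases isUnit_or_isUnit_of_isUnit_add hsum with hu | hu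
  · right
    linear_combination hu.mul_right_eq_zero.mp (by linear_combination h : (x - y) * (x + y) = 0)
  · left
    linear_combination hu.mul_right_eq_zero.mp (by linear_combination h : (x + y) * (x - y) = 0)

theorem Int.two_pow_dvd_sub_or_add_of_dvd_sq_sub_sq {x y : ℤ} {m : ℕ} (hx : Odd x) (hy : Odd y)
    (h : 2 ^ (m + 2) ∣ x ^ 2 - y ^ 2) : 2 ^ (m + 1) ∣ x - y ∨ 2 ^ (m + 1) ∣ x + y := by
  obtain ⟨s, hs⟩ : Even (x - y) := hx.sub_odd hy
  obtain ⟨t, ht⟩ : Even (x + y) := hx.add_odd hy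
  have hst : 2 ^ m ∣ s * t := by
    rw [pow_add, show x ^ 2 - y ^ 2 = s * t * 2 ^ 2 by
      linear_combination (x + y) * hs + (s + s) * ht] at h
    exact (mul_dvd_mul_iff_right (by norm_num)).mp h
  -- `s + t = x` is odd, so the power of two dividing `s * t` divides one of the factors
  have hparity : Odd s ↔ Even t := Int.odd_add.mp (by rwa [show s + t = x by linarith])
  rcases Int.even_or_odd s with hs' | hs'
  · have ht' : ¬ 2 ∣ t := by
      rw [← even_iff_two_dvd, ← hparity, Int.not_odd_iff_even]
      exact hs'
    left
    rw [hs, ← two_mul, pow_succ']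
    exact mul_dvd_mul_left 2 (Int.prime_two.pow_dvd_of_dvd_mul_right m ht' hst)
  · have hs'' : ¬ 2 ∣ s := by rwa [← even_iff_two_dvd, Int.not_even_iff_odd]
    right
    rw [ht, ← two_mul, pow_succ']
    exact mul_dvd_mul_left 2 (Int.prime_two.pow_dvd_of_dvd_mul_left m hs'' hst)

section Counting

variable {R : Type*} [CommRing R] [Fintype R] [DecidableEq R]

theorem card_triples_eq_sum_card_pairs (D A : R) :
    Nat.card {t : R × R × R // (t.1 * t.2.1 + 1) ^ 2 + D * (t.2.1 * t.2.2) ^ 2 = A} =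
      ∑ β, #{x : R × R | (x.1 * β + 1) ^ 2 + D * (β * x.2) ^ 2 = A} := by
  simp only [Nat.card_eq_fintype_card, Fintype.card_subtype, card_filter, Fintype.sum_prod_type]
  exact sum_comm

theorem card_pairs_le_card_conic_of_isUnit (D A : R) {β : R} (hβ : IsUnit β) :
    #{x : R × R | (x.1 * β + 1) ^ 2 + D * (β * x.2) ^ 2 = A} ≤
      #{y : R × R | y.1 ^ 2 + D * y.2 ^ 2 = A} := by
  refine card_le_card_of_injOn (fun x => (x.1 * β + 1, β * x.2)) (fun x hx => ?_) ?_
  · simpa using hx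
  · intro x _ x' _ h
    simp only [Prod.mk.injEq, add_left_inj] at h
    exact Prod.ext (hβ.mul_right_cancel h.1) (hβ.mul_left_cancel h.2)

end Counting

namespace ZMod

theorem intCast_eq_zero_or_eq_two_pow {m : ℕ} {z : ℤ} (h : 2 ^ m ∣ z) :
    (z : ZMod (2 ^ (m + 1))) = 0 ∨ (z : ZMod (2 ^ (m + 1))) = 2 ^ m := by
  have hchar : (2 : ZMod (2 ^ (m + 1))) ^ (m + 1) = 0 := by
    exact_mod_cast natCast_self (2 ^ (m + 1))
  obtain ⟨w, rfl⟩ := h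
  rcases Int.even_or_odd' w with ⟨q, rfl | rfl⟩
  · left
    push_cast
    linear_combination (q : ZMod (2 ^ (m + 1))) * hchar
  · right
    push_cast
    linear_combination (q : ZMod (2 ^ (m + 1))) * hchar

theorem card_filter_dvd_val_le {n m : ℕ} [NeZero n] (hm : m ∣ n) :
    #{x : ZMod n | m ∣ x.val} ≤ n / m := by
  have hm0 : 0 < m := Nat.pos_of_dvd_of_pos hm (NeZero.pos n)
  calc #{x : ZMod n | m ∣ x.val} ≤ #(range (n / m)) := by
        refine card_le_card_of_injOn (fun x => x.val / m) (fun x _ => ?_) fun x hx y hy hxy => ?_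
        · rw [coe_range, Set.mem_Iio]
          exact Nat.div_lt_div_of_lt_of_dvd hm (val_lt x)
        · simp only [coe_filter, mem_univ, true_and, Set.mem_ofPred_eq] at hx hy
          exact val_injective n ((Nat.div_left_inj hx hy).mp hxy)
    _ = n / m := card_range _

theorem card_filter_isUnit (n : ℕ) [NeZero n] : #{x : ZMod n | IsUnit x} = n.totient := by
  rw [← card_units_eq_totient, ← card_univ, ← card_map ⟨Units.val, Units.val_injective⟩]
  congr 1
  ext x
  simp [IsUnit, eq_comm]

theorem card_filter_mul_eq_le {n : ℕ} [NeZero n] (β d : ZMod n) :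
    #{α : ZMod n | α * β = d} ≤ n.gcd β.val := by
  rcases (univ.filter fun α : ZMod n => α * β = d).eq_empty_or_nonempty with h | ⟨α₀, hα₀⟩
  · simp [h]
  have hn := NeZero.pos n
  set m := n / n.gcd β.val
  have hm : m * n.gcd β.val = n := Nat.div_mul_cancel (Nat.gcd_dvd_left n _)
  have hm0 : 0 < m := Nat.pos_of_mul_pos_right (hm ▸ hn)
  -- all solutions are congruent modulo `m`, so they are told apart by `val / m`
  have hcongr : ∀ α ∈ univ.filter fun α : ZMod n => α * β = d, α.val % m = α₀.val % m := by
    intro α hα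
    simp only [mem_filter, mem_univ, true_and] at hα hα₀
    refine Nat.ModEq.cancel_right_div_gcd hn ?_
    rw [← natCast_eq_natCast_iff, Nat.cast_mul, Nat.cast_mul, natCast_zmod_val, natCast_zmod_val,
      natCast_zmod_val, hα, hα₀]
  calc #{α : ZMod n | α * β = d} ≤ #(range (n.gcd β.val)) := by
        refine card_le_card_of_injOn (fun α => α.val / m) (fun α _ => ?_) fun α hα α' hα' h => ?_
        · rw [coe_range, Set.mem_Iio, Nat.div_lt_iff_lt_mul hm0, mul_comm, hm]
          exact val_lt α
        · apply val_injective n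
          rw [← Nat.div_add_mod α.val m, ← Nat.div_add_mod α'.val m, hcongr α hα, hcongr α' hα']
          simp only at h
          rw [h]
    _ = n.gcd β.val := card_range _

section PrimePow

variable {p k : ℕ} [Fact p.Prime]

theorem isUnit_prime_pow_iff_not_dvd_val (hk : k ≠ 0) (x : ZMod (p ^ k)) :
    IsUnit x ↔ ¬ p ∣ x.val := by
  rw [← isUnit_natCast_iff_not_dvd_pow Fact.out (Nat.pos_of_ne_zero hk), natCast_zmod_val]

theorem isLocalRing_prime_pow (hk : k ≠ 0) : IsLocalRing (ZMod (p ^ k)) := by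
  have : Nontrivial (ZMod (p ^ k)) :=
    nontrivial_iff.mpr (Nat.one_lt_pow hk (Fact.out : p.Prime).one_lt).ne'
  refine .of_nonunits_add fun a b ha hb => ?_
  simp only [mem_nonunits_iff, isUnit_prime_pow_iff_not_dvd_val hk, not_not] at *
  rw [val_add]
  exact (Nat.dvd_mod_iff (dvd_pow_self p hk)).mpr (dvd_add ha hb)

theorem card_filter_not_isUnit_le (hk : k ≠ 0) :
    #{x : ZMod (p ^ k) | ¬ IsUnit x} ≤ p ^ (k - 1) := by
  simp only [isUnit_prime_pow_iff_not_dvd_val hk, not_not]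
  convert card_filter_dvd_val_le (dvd_pow_self p hk) using 1
  rw [← Nat.pow_div (Nat.one_le_iff_ne_zero.mpr hk) (Fact.out : p.Prime).pos, pow_one]

end PrimePow

theorem odd_val_of_isUnit {k : ℕ} (hk : k ≠ 0) {x : ZMod (2 ^ k)} (hx : IsUnit x) :
    Odd (x.val : ℤ) := by
  rw [Int.odd_coe_nat, ← Nat.not_even_iff_odd, even_iff_two_dvd]
  exact (isUnit_prime_pow_iff_not_dvd_val hk x).mp hx

theorem mem_of_sq_eq_sq_two_pow {m : ℕ} {x y : ZMod (2 ^ (m + 2))} (hx : IsUnit x)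
    (hy : IsUnit y) (h : x ^ 2 = y ^ 2) :
    x ∈ ({y, -y, y + 2 ^ (m + 1), -y + 2 ^ (m + 1)} : Finset _) := by
  have hdvd : 2 ^ (m + 2) ∣ (x.val : ℤ) ^ 2 - (y.val : ℤ) ^ 2 := by
    have := (intCast_eq_intCast_iff_dvd_sub ((y.val : ℤ) ^ 2) ((x.val : ℤ) ^ 2) (2 ^ (m + 2))).mp
      (by push_cast; rw [natCast_zmod_val, natCast_zmod_val, h])
    exact_mod_cast this
  simp only [mem_insert, mem_singleton]
  rcases Int.two_pow_dvd_sub_or_add_of_dvd_sq_sub_sq (odd_val_of_isUnit (by omega) hx)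
    (odd_val_of_isUnit (by omega) hy) hdvd with h' | h' <;>
  rcases intCast_eq_zero_or_eq_two_pow h' with h'' | h'' <;>
  push_cast [natCast_zmod_val] at h''
  · exact .inl (by linear_combination h'')
  · exact .inr (.inr (.inl (by linear_combination h'')))
  · exact .inr (.inl (by linear_combination h''))
  · exact .inr (.inr (.inr (by linear_combination h'')))

end ZMod

/-- The paper's `η(p^k)`. -/
def unitSqrtBound (p k : ℕ) : ℕ := if p = 2 ∧ 3 ≤ k then 4 else 2

namespace ZMod

variable {p k : ℕ} [Fact p.Prime]

theorem card_filter_isUnit_sq_eq_le (hk : k ≠ 0) (c : ZMod (p ^ k)) :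
    #{x : ZMod (p ^ k) | IsUnit x ∧ x ^ 2 = c} ≤ unitSqrtBound p k := by
  rcases (univ.filter fun x : ZMod (p ^ k) => IsUnit x ∧ x ^ 2 = c).eq_empty_or_nonempty
    with h | ⟨y, hy⟩
  · simp [h]
  simp only [mem_filter, mem_univ, true_and] at hy
  obtain ⟨hyu, rfl⟩ := hy
  unfold unitSqrtBound
  split_ifs with h2k
  · obtain ⟨rfl, hk3⟩ := h2k
    obtain ⟨m, rfl⟩ : ∃ m, k = m + 2 := ⟨k - 2, by omega⟩
    calc _ ≤ #({y, -y, y + 2 ^ (m + 1), -y + 2 ^ (m + 1)} : Finset _) := card_le_card fun x hx => by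
          simp only [mem_filter, mem_univ, true_and] at hx
          exact mem_of_sq_eq_sq_two_pow hx.1 hyu hx.2
      _ ≤ 4 := card_le_four
  by_cases hp2 : p = 2
  · subst hp2
    calc _ ≤ #{x : ZMod (2 ^ k) | IsUnit x} := card_le_card fun x hx => by
          simp only [mem_filter, mem_univ, true_and] at hx ⊢
          exact hx.1
      _ = 2 ^ (k - 1) := by
          rw [card_filter_isUnit, Nat.totient_prime_pow Nat.prime_two (by omega),
            Nat.add_one_sub_one, mul_one]
      _ ≤ 2 ^ 1 := Nat.pow_le_pow_right two_pos (by omega)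
  · have := isLocalRing_prime_pow (p := p) hk
    have h2 : IsUnit (2 : ZMod (p ^ k)) := by
      rw [← Nat.cast_ofNat, isUnit_natCast_iff_not_dvd_pow Fact.out (Nat.pos_of_ne_zero hk)]
      exact fun h => hp2 ((Nat.prime_dvd_prime_iff_eq Fact.out Nat.prime_two).mp h)
    calc _ ≤ #({y, -y} : Finset _) := card_le_card fun x hx => by
          simp only [mem_filter, mem_univ, true_and] at hx
          simpa using IsLocalRing.eq_or_eq_neg_of_sq_eq_sq h2 hyu hx.2
      _ ≤ 2 := card_le_two

theorem card_conic_le (hk : k ≠ 0) (D : ZMod (p ^ k)) {A : ZMod (p ^ k)}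
    (hA : IsUnit A) :
    #{y : ZMod (p ^ k) × ZMod (p ^ k) | y.1 ^ 2 + D * y.2 ^ 2 = A} ≤
      unitSqrtBound p k * (p ^ k + p ^ (k - 1)) := by
  have := isLocalRing_prime_pow (p := p) hk
  rw [← card_filter_add_card_filter_not (fun y => IsUnit y.1), mul_add]
  gcongr
  · calc _ ≤ unitSqrtBound p k * #(univ : Finset (ZMod (p ^ k))) :=
          card_le_mul_card_image_of_maps_to (f := Prod.snd) (fun _ _ => mem_univ _) _
            fun v _ => ?_
      _ = unitSqrtBound p k * p ^ k := by rw [card_univ, ZMod.card]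
    refine (card_le_card_of_injOn Prod.fst (fun y hy => ?_) fun y hy y' hy' h => ?_).trans
      (card_filter_isUnit_sq_eq_le hk (A - D * v ^ 2))
    · simp only [coe_filter, mem_filter, mem_univ, true_and, Set.mem_ofPred_eq] at hy ⊢
      obtain ⟨⟨hy, hu⟩, rfl⟩ := hy
      exact ⟨hu, by linear_combination hy⟩
    · simp only [coe_filter, mem_filter, mem_univ, true_and, Set.mem_ofPred_eq] at hy hy'
      exact Prod.ext h (hy.2.trans hy'.2.symm)
  · calc _ ≤ unitSqrtBound p k * #{x : ZMod (p ^ k) | ¬ IsUnit x} :=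
          card_le_mul_card_image_of_maps_to (f := Prod.fst) (fun y hy => ?_) _ fun w hw => ?_
      _ ≤ unitSqrtBound p k * p ^ (k - 1) := Nat.mul_le_mul_left _ (card_filter_not_isUnit_le hk)
    · simp only [mem_filter, mem_univ, true_and] at hy ⊢
      exact hy.2
    -- `D v² = A - w²` is a unit, hence so are `D` and `D v`, and `(D v)² = D (A - w²)`
    simp only [mem_filter, mem_univ, true_and] at hw
    have hc : IsUnit (A - w ^ 2) :=
      IsLocalRing.isUnit_sub_of_not_isUnit hA fun h => hw ((isUnit_pow_iff two_ne_zero).mp h)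
    refine (card_le_card_of_injOn (fun y => D * y.2) (fun y hy => ?_)
      fun y hy y' hy' h => ?_).trans (card_filter_isUnit_sq_eq_le hk (D * (A - w ^ 2)))
    · simp only [coe_filter, mem_filter, mem_univ, true_and, Set.mem_ofPred_eq] at hy ⊢
      obtain ⟨⟨hy, -⟩, rfl⟩ := hy
      have hDv : D * y.2 ^ 2 = A - y.1 ^ 2 := by linear_combination hy
      rw [← hDv] at hc
      refine ⟨(isUnit_of_mul_isUnit_left hc).mul ?_, by rw [← hDv]; ring⟩
      exact (isUnit_pow_iff two_ne_zero).mp (isUnit_of_mul_isUnit_right hc)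
    · simp only [coe_filter, mem_filter, mem_univ, true_and, Set.mem_ofPred_eq] at hy hy'
      obtain ⟨⟨hy, -⟩, rfl⟩ := hy
      rw [show A - y.1 ^ 2 = D * y.2 ^ 2 by linear_combination -hy] at hc
      exact Prod.ext hy'.2.symm ((isUnit_of_mul_isUnit_left hc).mul_left_cancel h)

theorem card_filter_mul_add_one_sq_eq_le (hk : k ≠ 0) {β : ZMod (p ^ k)} (hβ : ¬ IsUnit β)
    (c : ZMod (p ^ k)) :
    #{α : ZMod (p ^ k) | (α * β + 1) ^ 2 = c} ≤ unitSqrtBound p k * (p ^ k).gcd β.val := by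
  have := isLocalRing_prime_pow (p := p) hk
  rw [mul_comm (unitSqrtBound p k)]
  refine (card_le_mul_card_image (f := fun α => α * β + 1) _ _ fun w _ => ?_).trans
    (Nat.mul_le_mul_left _ ?_)
  · refine (card_le_card fun α hα => ?_).trans (card_filter_mul_eq_le β (w - 1))
    simp only [mem_filter, mem_univ, true_and] at hα ⊢
    linear_combination hα.2
  · refine (card_le_card fun w hw => ?_).trans (card_filter_isUnit_sq_eq_le hk c)
    obtain ⟨α, hα, rfl⟩ := mem_image.mp hw
    simp only [mem_filter, mem_univ, true_and] at hα ⊢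
    refine ⟨?_, hα⟩
    have := IsLocalRing.isUnit_sub_of_not_isUnit (b := -(α * β)) isUnit_one
      fun h => hβ (isUnit_of_mul_isUnit_right ((IsUnit.neg_iff _).mp h))
    rwa [sub_neg_eq_add, add_comm] at this

theorem card_pairs_le_of_not_isUnit (hk : k ≠ 0) (D A : ZMod (p ^ k)) {β : ZMod (p ^ k)}
    (hβ : ¬ IsUnit β) :
    #{x : ZMod (p ^ k) × ZMod (p ^ k) | (x.1 * β + 1) ^ 2 + D * (β * x.2) ^ 2 = A} ≤
      unitSqrtBound p k * (p ^ k).gcd β.val * p ^ k := by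
  calc _ ≤ unitSqrtBound p k * (p ^ k).gcd β.val * #(univ : Finset (ZMod (p ^ k))) :=
        card_le_mul_card_image_of_maps_to (f := Prod.snd) (fun _ _ => mem_univ _) _
          fun γ _ => ?_
    _ = _ := by rw [card_univ, ZMod.card]
  refine (card_le_card_of_injOn Prod.fst (fun x hx => ?_) fun x hx x' hx' h => ?_).trans
    (card_filter_mul_add_one_sq_eq_le hk hβ (A - D * (β * γ) ^ 2))
  · simp only [coe_filter, mem_filter, mem_univ, true_and, Set.mem_ofPred_eq] at hx ⊢
    obtain ⟨hx, rfl⟩ := hx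
    linear_combination hx
  · simp only [coe_filter, mem_filter, mem_univ, true_and, Set.mem_ofPred_eq] at hx hx'
    exact Prod.ext h (hx.2.trans hx'.2.symm)

theorem sum_gcd_val_le (hk : k ≠ 0) :
    ∑ β ∈ {β : ZMod (p ^ k) | ¬ IsUnit β}, (p ^ k).gcd β.val ≤ k * p ^ k := by
  have hp : p.Prime := Fact.out
  calc _ ≤ ∑ β ∈ {β : ZMod (p ^ k) | ¬ IsUnit β},
        ∑ j ∈ Icc 1 k, if p ^ j ∣ β.val then p ^ j else 0 := by
        refine sum_le_sum fun β hβ => ?_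
        simp only [mem_filter, mem_univ, true_and, isUnit_prime_pow_iff_not_dvd_val hk,
          not_not] at hβ
        -- `gcd(p^k, β) = p^i` with `1 ≤ i ≤ k`, which is the `j = i` term of the sum
        obtain ⟨i, hik, hi⟩ := (Nat.dvd_prime_pow hp).mp (Nat.gcd_dvd_left (p ^ k) β.val)
        have hi0 : i ≠ 0 := by
          rintro rfl
          have : p ∣ p ^ 0 := hi ▸ Nat.dvd_gcd (dvd_pow_self p hk) hβ
          exact hp.ne_one (Nat.dvd_one.mp this)
        refine le_of_eq_of_le ?_ (single_le_sum (fun j _ => Nat.zero_le _)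
          (mem_Icc.mpr ⟨Nat.one_le_iff_ne_zero.mpr hi0, hik⟩))
        rw [hi, if_pos (hi ▸ Nat.gcd_dvd_right _ _)]
    _ ≤ ∑ β : ZMod (p ^ k), ∑ j ∈ Icc 1 k, if p ^ j ∣ β.val then p ^ j else 0 :=
        sum_le_sum_of_subset (filter_subset _ _)
    _ = ∑ j ∈ Icc 1 k, #{β : ZMod (p ^ k) | p ^ j ∣ β.val} * p ^ j := by
        rw [sum_comm]
        simp_rw [← sum_filter, sum_const, smul_eq_mul]
    _ ≤ ∑ j ∈ Icc 1 k, p ^ (k - j) * p ^ j := sum_le_sum fun j hj =>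
        Nat.mul_le_mul_right _ ((card_filter_dvd_val_le (pow_dvd_pow p (mem_Icc.mp hj).2)).trans_eq
          (Nat.pow_div (mem_Icc.mp hj).2 hp.pos))
    _ = k * p ^ k := by
        rw [sum_congr rfl fun j hj => by rw [← pow_add, Nat.sub_add_cancel (mem_Icc.mp hj).2],
          sum_const, Nat.card_Icc, smul_eq_mul, Nat.add_sub_cancel]

theorem card_filter_isUnit_mul_le (hk : k ≠ 0) :
    #{x : ZMod (p ^ k) | IsUnit x} * (p ^ k + p ^ (k - 1)) ≤ p ^ (2 * k) := by
  obtain ⟨m, rfl⟩ : ∃ m, k = m + 1 := ⟨k - 1, by omega⟩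
  rw [card_filter_isUnit, Nat.totient_prime_pow_succ Fact.out, Nat.add_sub_cancel]
  calc p ^ m * (p - 1) * (p ^ (m + 1) + p ^ m) = p ^ m * p ^ m * ((p + 1) * (p - 1)) := by ring
    _ ≤ p ^ m * p ^ m * (p * p) := by
        rw [← Nat.mul_self_sub_mul_self_eq, one_mul]
        exact Nat.mul_le_mul_left _ (Nat.sub_le _ _)
    _ = p ^ (2 * (m + 1)) := by ring

end ZMod

/-- For a prime `p`, `k ≥ 1`, integers `D` and `a` with `gcd(a, p) = 1`, the number of triples
`(α, β, γ)` in `(ℤ/p^kℤ)³` with `(αβ + 1)² + D(βγ)² ≡ a (mod p^k)` is at most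
`2k·η(p^k)·p^(2k)`, where `η(p^k) = 4` if `p = 2 ∧ k ≥ 3` and `η(p^k) = 2` otherwise. -/
theorem statement14 (p : ℕ) (hp : p.Prime) (k : ℕ) (hk : 1 ≤ k) (D a : ℤ)
    (ha : IsCoprime a (p : ℤ)) :
    Nat.card {t : ZMod (p ^ k) × ZMod (p ^ k) × ZMod (p ^ k) //
        (t.1 * t.2.1 + 1) ^ 2 + (D : ZMod (p ^ k)) * (t.2.1 * t.2.2) ^ 2 = (a : ZMod (p ^ k))} ≤
      2 * k * (if p = 2 ∧ 3 ≤ k then 4 else 2) * p ^ (2 * k) := by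
  have := Fact.mk hp
  have hk0 : k ≠ 0 := Nat.one_le_iff_ne_zero.mp hk
  have hA : IsUnit (a : ZMod (p ^ k)) := by
    have h : IsCoprime a ((p ^ k : ℕ) : ℤ) := by push_cast; exact ha.pow_right
    exact (ZMod.unitOfIsCoprime a h).isUnit
  change _ ≤ 2 * k * unitSqrtBound p k * p ^ (2 * k)
  set η := unitSqrtBound p k
  rw [card_triples_eq_sum_card_pairs, ← sum_filter_add_sum_filter_not univ IsUnit]
  calc _ ≤ ∑ _β ∈ {β : ZMod (p ^ k) | IsUnit β}, η * (p ^ k + p ^ (k - 1)) +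
        ∑ β ∈ {β : ZMod (p ^ k) | ¬ IsUnit β}, η * (p ^ k).gcd β.val * p ^ k := by
        gcongr with β hβ β hβ
        · exact (card_pairs_le_card_conic_of_isUnit _ _ (mem_filter.mp hβ).2).trans
            (ZMod.card_conic_le hk0 _ hA)
        · exact ZMod.card_pairs_le_of_not_isUnit hk0 _ _ (mem_filter.mp hβ).2
    _ = η * (#{β : ZMod (p ^ k) | IsUnit β} * (p ^ k + p ^ (k - 1))) +
        η * p ^ k * ∑ β ∈ {β : ZMod (p ^ k) | ¬ IsUnit β}, (p ^ k).gcd β.val := by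
        rw [sum_const, smul_eq_mul, mul_sum]
        exact congrArg₂ _ (by ring) (sum_congr rfl fun _ _ => by ring)
    _ ≤ η * p ^ (2 * k) + η * p ^ k * (k * p ^ k) := by
        gcongr
        exacts [ZMod.card_filter_isUnit_mul_le hk0, ZMod.sum_gcd_val_le hk0]
    _ = (k + 1) * η * p ^ (2 * k) := by ring
    _ ≤ 2 * k * η * p ^ (2 * k) := by gcongr; omega
end
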